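/- For all sufficiently large n, log((A_{n+1}/(n+1)!)/(A_n/n!)) >= log((A_n/n!)/(A_{n-1}/(n-1)!)), i.e. the sequence A_n/n! is eventually log-convex, where A_n is the number of labeled DAGs on n vertices. -/

import Mathlib

/-!
Let `E v` be the set of DAGs in which the vertex `v` is a source. A DAG in which every vertex of
a set `S` is a source is the same as a choice of edges from `S` to its complement together with
a DAG on the complement, so `#(E v) = 2 ^ (n - 1) * A (n - 1)` and
`#(E v ∩ E w) = 2 ^ (2 * (n - 2)) * A (n - 2)` for `v ≠ w`. Every DAG has a source, so the union
bound gives `A (n + 1) ≤ (n + 1) * 2 ^ n * A n`, while the degree-two Bonferroni inequality gives,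
by induction on `n`, the matching lower bound `(n + 1) * 2 ^ (n + 1) * A n ≤ 4 * A (n + 1)`.
Combining the two yields `(n + 2) * A (n + 1) ^ 2 ≤ (n + 1) * A n * A (n + 2)`, which is the
log-convexity of `A n / n!`.
-/

open Filter Finset

/-- A directed graph (given by its edge relation) is acyclic iff no vertex lies on a
directed cycle, i.e. the transitive closure is irreflexive. -/
def DigraphAcyclic {V : Type*} (g : V → V → Prop) : Prop :=
  ∀ a, ¬ Relation.TransGen g a a

/-- The number of labeled DAGs on `n` vertices. -/
noncomputable def dagCount (n : ℕ) : ℕ :=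
  Nat.card {g : Fin n → Fin n → Bool // DigraphAcyclic fun x y => g x y = true}

/-- The number of connected labeled DAGs on `n` vertices (connected means the
underlying undirected graph is connected). -/
noncomputable def connDagCount (n : ℕ) : ℕ :=
  Nat.card {g : Fin n → Fin n → Bool //
    (DigraphAcyclic fun x y => g x y = true) ∧
    ∀ a b : Fin n, Relation.ReflTransGen (fun x y => g x y = true ∨ g y x = true) a b}

theorem two_mul_card_le_two_add_card_offDiag {ι : Type*} {s : Finset ι} (hs : s.Nonempty) :
    2 * #s ≤ 2 + #s.offDiag := by
  have hpos := hs.card_pos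
  have hsq : #s ≤ #s * #s := Nat.le_mul_self _
  rw [offDiag_card]
  zify [hsq]
  nlinarith

theorem two_mul_sum_card_le_two_mul_card_biUnion_add_sum_card_inter {ι Ω : Type*}
    [DecidableEq Ω] (s : Finset ι) (A : ι → Finset Ω) :
    2 * ∑ i ∈ s, #(A i) ≤
      2 * #(s.biUnion A) + ∑ p ∈ s.offDiag, #(A p.1 ∩ A p.2) := by
  set U := s.biUnion A
  have hcard : ∀ B ⊆ U, #B = ∑ ω ∈ U, if ω ∈ B then 1 else 0 := fun B hB => by
    rw [← card_filter, filter_mem_eq_inter, inter_eq_right.2 hB]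
  have hA : ∀ i ∈ s, A i ⊆ U := fun i hi => subset_biUnion_of_mem A hi
  rw [sum_congr rfl fun i hi => hcard _ (hA i hi),
    sum_congr rfl fun p hp => hcard _ (inter_subset_left.trans (hA p.1 (mem_offDiag.1 hp).1)),
    sum_comm, sum_comm (s := s.offDiag), mul_sum, card_eq_sum_ones U, mul_sum, ← sum_add_distrib]
  refine sum_le_sum fun ω hω => ?_
  have hne : (s.filter (ω ∈ A ·)).Nonempty := by
    obtain ⟨i, hi, hωi⟩ := mem_biUnion.1 hω
    exact ⟨i, mem_filter.2 ⟨hi, hωi⟩⟩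
  have hoff :
      (s.filter (ω ∈ A ·)).offDiag = s.offDiag.filter fun p => ω ∈ A p.1 ∩ A p.2 := by
    ext p; simp only [mem_offDiag, mem_filter, mem_inter]; tauto
  simpa [← card_filter, hoff] using two_mul_card_le_two_add_card_offDiag hne

namespace DigraphAcyclic

variable {V : Type*} {g : V → V → Prop}

theorem comap {W : Type*} (hg : DigraphAcyclic g) (f : W → V) :
    DigraphAcyclic fun x y => g (f x) (f y) :=
  fun a ha => hg (f a) (ha.lift f fun _ _ h => h)

theorem exists_source [Finite V] [Nonempty V] (hg : DigraphAcyclic g) : ∃ v, ∀ x, ¬ g x v := by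
  have : Std.Irrefl (Relation.TransGen g) := ⟨hg⟩
  obtain ⟨v, -, hv⟩ := (Finite.wellFounded_of_trans_of_irrefl (Relation.TransGen g)).has_min
    Set.univ Set.univ_nonempty
  exact ⟨v, fun x hx => hv x trivial (.single hx)⟩

theorem of_restrict_compl {p : V → Prop} (hp : ∀ x y, g x y → ¬ p y)
    (h : DigraphAcyclic fun x y : {x // ¬ p x} => g x y) : DigraphAcyclic g := by
  have lift : ∀ a b, Relation.TransGen g a b → ∀ (ha : ¬ p a) (hb : ¬ p b),
      Relation.TransGen (fun x y : {x // ¬ p x} => g x y) ⟨a, ha⟩ ⟨b, hb⟩ := by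
    intro a b hab
    induction hab using Relation.TransGen.head_induction_on with
    | single hab => exact fun _ _ => .single hab
    | head hac _ ih => exact fun _ hb => .head hac (ih (hp _ _ hac) hb)
  intro a ha
  obtain ⟨c, -, hca⟩ := Relation.TransGen.tail'_iff.1 ha
  exact h ⟨a, hp c a hca⟩ (lift a a ha _ _)

end DigraphAcyclic

abbrev Dag (V : Type*) := {g : V → V → Bool // DigraphAcyclic fun x y => g x y = true}

namespace Dag

variable {V W : Type*}

def IsSource (g : Dag V) (v : V) : Prop := ∀ x, g.1 x v = false

theorem exists_isSource [Finite V] [Nonempty V] (g : Dag V) : ∃ v, g.IsSource v := by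
  simpa [IsSource] using g.2.exists_source

def congr (e : V ≃ W) : Dag V ≃ Dag W :=
  (e.arrowCongr (e.arrowCongr (Equiv.refl Bool))).subtypeEquiv fun g =>
    ⟨fun h => h.comap e.symm, fun h => by simpa using h.comap e⟩

theorem natCard_eq_dagCount [Fintype V] : Nat.card (Dag V) = dagCount (Fintype.card V) :=
  Nat.card_congr (congr (Fintype.equivFin V))

variable [DecidableEq V]

-- No edge ends in a source, so in particular no edge runs inside `S`.
def sourcesEquiv (S : Finset V) :
    {g : Dag V // ∀ v ∈ S, g.IsSource v} ≃
      (S → {x // x ∉ S} → Bool) × Dag {x // x ∉ S} where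
  toFun g := (fun v y => g.1.1 v y, ⟨fun x y => g.1.1 x y, g.1.2.comap _⟩)
  invFun p :=
    ⟨⟨fun x y => if hy : y ∈ S then false
        else if hx : x ∈ S then p.1 ⟨x, hx⟩ ⟨y, hy⟩ else p.2.1 ⟨x, hx⟩ ⟨y, hy⟩,
      DigraphAcyclic.of_restrict_compl (p := (· ∈ S)) (fun x y => by simp +contextual)
        (by convert p.2.2 using 4 with x y; simp [x.2, y.2])⟩,
      fun v hv x => by simp [hv]⟩
  left_inv g := by
    ext x y
    by_cases hy : y ∈ S
    · simp [hy, g.2 y hy x]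
    · by_cases hx : x ∈ S <;> simp [hx, hy]
  right_inv p := by ext x y <;> simp [x.2, y.2]

variable [Fintype V]

theorem natCard_forall_isSource (S : Finset V) :
    Nat.card {g : Dag V // ∀ v ∈ S, g.IsSource v} =
      2 ^ (#S * (Fintype.card V - #S)) * dagCount (Fintype.card V - #S) := by
  rw [Nat.card_congr (sourcesEquiv S), Nat.card_prod, natCard_eq_dagCount]
  simp [Fintype.card_subtype_compl, ← pow_mul, mul_comm]

theorem natCard_isSource (v : V) :
    Nat.card {g : Dag V // g.IsSource v} =
      2 ^ (Fintype.card V - 1) * dagCount (Fintype.card V - 1) := by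
  simpa using natCard_forall_isSource {v}

theorem natCard_isSource_and {v w : V} (hvw : v ≠ w) :
    Nat.card {g : Dag V // g.IsSource v ∧ g.IsSource w} =
      2 ^ (2 * (Fintype.card V - 2)) * dagCount (Fintype.card V - 2) := by
  simpa [hvw] using natCard_forall_isSource {v, w}

end Dag

theorem dagCount_succ_le (n : ℕ) : dagCount (n + 1) ≤ (n + 1) * (2 ^ n * dagCount n) := by
  have h := Nat.card_le_card_of_injective
    (β := Σ v, {g : Dag (Fin (n + 1)) // g.IsSource v})
    (fun g => ⟨_, g, g.exists_isSource.choose_spec⟩)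
    fun g g' hgg' => congrArg (fun p => p.2.1) hgg'
  simpa [Nat.card_sigma, Dag.natCard_isSource, Dag.natCard_eq_dagCount] using h

theorem dagCount_bonferroni (m : ℕ) :
    2 * ((m + 2) * (2 ^ (m + 1) * dagCount (m + 1))) ≤
      2 * dagCount (m + 2) + (m + 2) * (m + 1) * (2 ^ (2 * m) * dagCount m) := by
  classical
  let E (v : Fin (m + 2)) : Finset (Dag (Fin (m + 2))) := {g | g.IsSource v}
  have hcover : univ.biUnion E = univ :=
    eq_univ_of_forall fun g => by simpa [E] using g.exists_isSource
  have h := two_mul_sum_card_le_two_mul_card_biUnion_add_sum_card_inter univ E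
  rw [hcover, card_univ, ← Nat.card_eq_fintype_card, Dag.natCard_eq_dagCount] at h
  simp only [E, ← filter_and, ← Fintype.card_subtype, ← Nat.card_eq_fintype_card] at h
  rw [sum_congr rfl fun v _ => Dag.natCard_isSource v,
    sum_congr rfl fun p hp => Dag.natCard_isSource_and (mem_offDiag.1 hp).2.2] at h
  have hoff : #(univ : Finset (Fin (m + 2))).offDiag = (m + 2) * (m + 1) := by
    rw [offDiag_card, card_univ, Fintype.card_fin, ← Nat.mul_sub_one]; rfl
  simpa [hoff] using h

theorem two_pow_mul_dagCount_le (n : ℕ) : 2 ^ n * dagCount n ≤ dagCount (n + 1) := by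
  simpa [Dag.natCard_isSource, Dag.natCard_eq_dagCount] using
    Finite.card_subtype_le fun g : Dag (Fin (n + 1)) => g.IsSource 0

theorem succ_mul_two_pow_mul_dagCount_le (m : ℕ) :
    (m + 1) * 2 ^ (m + 1) * dagCount m ≤ 4 * dagCount (m + 1) := by
  induction m with
  | zero => norm_num; linarith [two_pow_mul_dagCount_le 0]
  | succ m ih =>
    have h := dagCount_bonferroni m
    rw [pow_succ] at ih
    rw [pow_succ, two_mul m, pow_add] at h
    rw [pow_succ, pow_succ]
    -- by `ih`, the pair sum of the Bonferroni inequality is at most its single sum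
    nlinarith [Nat.mul_le_mul_left ((m + 2) * 2 ^ m) ih]

theorem succ_mul_dagCount_sq_le (k : ℕ) :
    (k + 2) * dagCount (k + 1) ^ 2 ≤ (k + 1) * (dagCount k * dagCount (k + 2)) := by
  have hlower := succ_mul_two_pow_mul_dagCount_le (k + 1)
  have hupper := dagCount_succ_le k
  refine Nat.le_of_mul_le_mul_left ?_ (by positivity : 0 < 4 * 2 ^ k)
  calc 4 * 2 ^ k * ((k + 2) * dagCount (k + 1) ^ 2)
      = ((k + 1 + 1) * 2 ^ (k + 1 + 1) * dagCount (k + 1)) * dagCount (k + 1) := by ring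
    _ ≤ 4 * dagCount (k + 2) * ((k + 1) * (2 ^ k * dagCount k)) := Nat.mul_le_mul hlower hupper
    _ = 4 * 2 ^ k * ((k + 1) * (dagCount k * dagCount (k + 2))) := by ring

theorem dagCount_pos (n : ℕ) : 0 < dagCount n :=
  have : Nonempty (Dag (Fin n)) := ⟨⟨fun _ _ => false, fun _ h => by
    obtain ⟨_, hab, -⟩ := Relation.TransGen.head'_iff.1 h
    exact Bool.false_ne_true hab⟩⟩
  Nat.card_pos

theorem dagCount_div_factorial_sq_le (k : ℕ) :
    ((dagCount (k + 1) : ℝ) / (k + 1).factorial) ^ 2 ≤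
      (dagCount k / k.factorial) * (dagCount (k + 2) / (k + 2).factorial) := by
  have hkey : ((k : ℝ) + 2) * dagCount (k + 1) ^ 2 ≤
      (k + 1) * (dagCount k * dagCount (k + 2)) := by
    exact_mod_cast succ_mul_dagCount_sq_le k
  rw [Nat.factorial_succ (k + 1), Nat.factorial_succ k, div_pow, div_mul_div_comm,
    div_le_div_iff₀ (by positivity) (by positivity)]
  push_cast
  calc _ = ((k : ℝ) + 1) * k.factorial ^ 2 * (((k : ℝ) + 2) * dagCount (k + 1) ^ 2) := by ring
    _ ≤ ((k : ℝ) + 1) * k.factorial ^ 2 * ((k + 1) * (dagCount k * dagCount (k + 2))) := by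
      gcongr
    _ = _ := by ring

theorem dagCount_div_factorial_eventually_logConvex :
    ∀ᶠ n : ℕ in atTop,
      Real.log (((dagCount (n + 1) : ℝ) / (n + 1).factorial) /
          ((dagCount n : ℝ) / n.factorial)) ≥
        Real.log (((dagCount n : ℝ) / n.factorial) /
          ((dagCount (n - 1) : ℝ) / (n - 1).factorial)) := by
  filter_upwards [eventually_ge_atTop 1] with n hn
  obtain ⟨k, rfl⟩ := Nat.exists_eq_add_of_le' hn
  have hpos (m : ℕ) : 0 < (dagCount m : ℝ) / m.factorial := by
    have := dagCount_pos m
    positivity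
  rw [Nat.add_sub_cancel, ge_iff_le]
  refine Real.log_le_log (div_pos (hpos _) (hpos _)) ?_
  rw [div_le_div_iff₀ (hpos _) (hpos _), ← sq, mul_comm]
  exact dagCount_div_factorial_sq_le k
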